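/- Let K be a commutative ring, P a finite poset, U ⊆ P a sieve with inclusion u : U ↪ P, F ∈ (K-Mod)^P and G ∈ (K-Mod)^U. Then the canonical projection morphism F ⊗ u_* G → u_*(u^* F ⊗ G), defined as the composite F ⊗ u_* G → u_* u^*(F ⊗ u_* G) ≅ u_*(u^* F ⊗ u^* u_* G) → u_*(u^* F ⊗ G) using the unit of the adjunction, the fact that u^* commutes with the pointwise tensor product, and the counit, is an isomorphism. -/

import Mathlib

open CategoryTheory CategoryTheory.Limits CategoryTheory.MonoidalCategory

universe u

variable (K : Type u) [CommRing K] (P : Type u) [PartialOrder P]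

def inclFunctor (U : Set P) : (↥U) ⥤ P :=
  (Subtype.mono_coe (· ∈ U)).functor

noncomputable def projMor (U : Set P) (F : P ⥤ ModuleCat.{u} K)
    (G : (↥U) ⥤ ModuleCat.{u} K) :
    F ⊗ ((inclFunctor P U).ran.obj G) ⟶
      (inclFunctor P U).ran.obj ((inclFunctor P U ⋙ F) ⊗ G) :=
  ((inclFunctor P U).ranAdjunction (ModuleCat.{u} K)).homEquiv
      (F ⊗ ((inclFunctor P U).ran.obj G)) ((inclFunctor P U ⋙ F) ⊗ G)
    (eqToHom (show inclFunctor P U ⋙ (F ⊗ ((inclFunctor P U).ran.obj G))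
          = (inclFunctor P U ⋙ F) ⊗ (inclFunctor P U ⋙ (inclFunctor P U).ran.obj G)
        from rfl) ≫
      ((inclFunctor P U ⋙ F) ◁
        (((inclFunctor P U).ranAdjunction (ModuleCat.{u} K)).counit.app G)))

instance (U : Set P) : (inclFunctor P U).Faithful :=
  ⟨fun {_ _ _ _} _ => Subsingleton.elim _ _⟩

instance (U : Set P) : (inclFunctor P U).Full :=
  ⟨fun {a b} f => ⟨homOfLE (leOfHom f), Subsingleton.elim _ _⟩⟩

lemma limit_subsingleton {J : Type u} [Category.{u} J] [IsEmpty J]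
    (D : J ⥤ ModuleCat.{u} K) : Subsingleton (limit D : ModuleCat.{u} K) := by
  constructor
  intro a b
  have h : ModuleCat.ofHom (LinearMap.toSpanSingleton K _ a) =
      ModuleCat.ofHom (LinearMap.toSpanSingleton K _ b) :=
    limit.hom_ext (fun j => IsEmpty.elim ‹_› j)
  have h2 : LinearMap.toSpanSingleton K (limit D : ModuleCat.{u} K) a =
      LinearMap.toSpanSingleton K (limit D : ModuleCat.{u} K) b := congrArg ModuleCat.Hom.hom h
  simpa using LinearMap.congr_fun h2 (1 : K)

/-- Let `U ⊆ P` be a sieve in a finite poset `P`, `F ∈ (K-Mod)^P` and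
`G ∈ (K-Mod)^U`.  Then the canonical projection morphism `F ⊗ u_* G → u_*(u^* F ⊗ G)` is an
isomorphism. -/
theorem statement_16 [Fintype P] (U : Set P)
    (hU : ∀ ⦃a b : P⦄, a ≤ b → b ∈ U → a ∈ U) (F : P ⥤ ModuleCat.{u} K)
    (G : (↥U) ⥤ ModuleCat.{u} K) :
    IsIso (projMor K P U F G) := by
  have fac : Functor.whiskerLeft (inclFunctor P U) (projMor K P U F G) ≫
        ((inclFunctor P U).ranAdjunction (ModuleCat.{u} K)).counit.app
          ((inclFunctor P U ⋙ F) ⊗ G)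
      = (inclFunctor P U ⋙ F) ◁
          (((inclFunctor P U).ranAdjunction (ModuleCat.{u} K)).counit.app G) := by
    have h : ((((inclFunctor P U).ranAdjunction (ModuleCat.{u} K)).homEquiv
          (F ⊗ ((inclFunctor P U).ran.obj G)) ((inclFunctor P U ⋙ F) ⊗ G)).symm
        (projMor K P U F G))
        = eqToHom rfl ≫ ((inclFunctor P U ⋙ F) ◁
            (((inclFunctor P U).ranAdjunction (ModuleCat.{u} K)).counit.app G)) :=
      Equiv.symm_apply_apply _ _
    rw [Adjunction.homEquiv_counit] at h
    simpa using h
  have key : ∀ p : P, IsIso ((projMor K P U F G).app p) := by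
    intro p
    by_cases hp : p ∈ U
    · have h0 := congr_app fac ⟨p, hp⟩
      simp only [NatTrans.comp_app, Functor.whiskerLeft_app, Monoidal.tensorObj_obj,
        Monoidal.whiskerLeft_app] at h0
      haveI : IsIso ((((inclFunctor P U).ranAdjunction
          (ModuleCat.{u} K)).counit.app G).app ⟨p, hp⟩) := by
        rw [(inclFunctor P U).ranAdjunction_counit (ModuleCat.{u} K)]
        infer_instance
      haveI : IsIso ((((inclFunctor P U).ranAdjunction
          (ModuleCat.{u} K)).counit.app ((inclFunctor P U ⋙ F) ⊗ G)).app ⟨p, hp⟩) := by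
        rw [(inclFunctor P U).ranAdjunction_counit (ModuleCat.{u} K)]
        infer_instance
      exact @IsIso.of_isIso_fac_right _ _ _ _ _ _ _ _ this (@MonoidalCategory.whiskerLeft_isIso _ _ _ _ _ _ _ (by exact ‹IsIso ((((inclFunctor P U).ranAdjunction (ModuleCat.{u} K)).counit.app G).app ⟨p, hp⟩)›)) h0
    · haveI : IsEmpty (StructuredArrow p (inclFunctor P U)) :=
        ⟨fun f => hp (hU (leOfHom f.hom) f.right.2)⟩
      haveI l1 := limit_subsingleton K
        (StructuredArrow.proj p (inclFunctor P U) ⋙ G)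
      haveI l2 := limit_subsingleton K
        (StructuredArrow.proj p (inclFunctor P U) ⋙ ((inclFunctor P U ⋙ F) ⊗ G))
      haveI s1 : Subsingleton ((((inclFunctor P U).ran.obj G).obj p :
          ModuleCat.{u} K)) :=
        (((inclFunctor P U).ranObjObjIsoLimit G p).toLinearEquiv).toEquiv.subsingleton
      haveI s2 : Subsingleton (((F ⊗ (inclFunctor P U).ran.obj G).obj p :
          ModuleCat.{u} K)) :=
        inferInstanceAs (Subsingleton
          (TensorProduct K (F.obj p) (((inclFunctor P U).ran.obj G).obj p)))
      haveI s3 : Subsingleton ((((inclFunctor P U).ran.obj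
          ((inclFunctor P U ⋙ F) ⊗ G)).obj p : ModuleCat.{u} K)) :=
        (((inclFunctor P U).ranObjObjIsoLimit ((inclFunctor P U ⋙ F) ⊗ G)
          p).toLinearEquiv).toEquiv.subsingleton
      have hb : Function.Bijective ((projMor K P U F G).app p) :=
        ⟨fun x y _ => Subsingleton.elim x y, fun y => ⟨0, Subsingleton.elim _ _⟩⟩
      exact (ConcreteCategory.isIso_iff_bijective _).2 hb
  exact NatIso.isIso_of_isIso_app _
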